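/- arXiv:2106.15929 — 2 statements merged into one kernel-verified Lean document; each statement's English description precedes it below -/
import Mathlib

section
/- Let H : ℝⁿ ⇉ ℝⁿ be a closed convex process and K ≠ {0} a closed convex cone in ℝⁿ. Suppose that K does not contain a line, H(0) ∩ K = {0}, and K is weakly H invariant. Then K contains an eigenvector of H corresponding to a nonnegative eigenvalue, i.e. there exist ξ ∈ K with ξ ≠ 0 and λ ≥ 0 such that λξ ∈ H(ξ). -/
open Pointwise Set RealInnerProductSpace

namespace ConvexProcessPaper

/-- A convex cone: a nonempty convex set closed under nonnegative scalar multiplication. -/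
def IsConvexCone {V : Type*} [AddCommMonoid V] [Module ℝ V] (S : Set V) : Prop :=
  S.Nonempty ∧ Convex ℝ S ∧ ∀ c : ℝ, 0 ≤ c → ∀ x ∈ S, c • x ∈ S

/-- A set is a linear subspace. -/
def IsLinearSubspace {V : Type*} [AddCommGroup V] [Module ℝ V] (S : Set V) : Prop :=
  ∃ W : Submodule ℝ V, (W : Set V) = S

/-- Set-valued maps from ℝⁿ to ℝⁿ. -/
abbrev SVMap (n : ℕ) := EuclideanSpace ℝ (Fin n) → Set (EuclideanSpace ℝ (Fin n))

variable {n : ℕ}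

/-- The graph of a set-valued map. -/
def graph (H : SVMap n) : Set (EuclideanSpace ℝ (Fin n) × EuclideanSpace ℝ (Fin n)) :=
  {p | p.2 ∈ H p.1}

/-- A convex process: a set-valued map whose graph is a convex cone. -/
def IsConvexProcess (H : SVMap n) : Prop := IsConvexCone (graph H)

/-- The domain of a set-valued map. -/
def dom (H : SVMap n) : Set (EuclideanSpace ℝ (Fin n)) := {x | (H x).Nonempty}

/-- The image of a set-valued map. -/
def im (H : SVMap n) : Set (EuclideanSpace ℝ (Fin n)) := {y | ∃ x, y ∈ H x}

/-- The inverse of a set-valued map: gr(H⁻¹) = {(y,x) : (x,y) ∈ gr(H)}. -/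
def invMap (H : SVMap n) : SVMap n := fun y => {x | y ∈ H x}

/-- The image of a set under a set-valued map: H(S) = ⋃_{x ∈ S} H(x). -/
def imSet (H : SVMap n) (S : Set (EuclideanSpace ℝ (Fin n))) :
    Set (EuclideanSpace ℝ (Fin n)) := ⋃ x ∈ S, H x

/-- The reachable set: R(H) = ⋃_{ℓ ≥ 0} H^ℓ({0}). -/
def reach (H : SVMap n) : Set (EuclideanSpace ℝ (Fin n)) := ⋃ ℓ : ℕ, (imSet H)^[ℓ] {0}

/-- The null-controllable set: N(H) = R(H⁻¹). -/
def nullc (H : SVMap n) : Set (EuclideanSpace ℝ (Fin n)) := reach (invMap H)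

/-- The feasible set: states from which an infinite trajectory emanates. -/
def feas (H : SVMap n) : Set (EuclideanSpace ℝ (Fin n)) :=
  {ξ | ∃ x : ℕ → EuclideanSpace ℝ (Fin n), x 0 = ξ ∧ ∀ k, x (k + 1) ∈ H (x k)}

/-- The minimal linear process L₋: gr(L₋) = lin(gr(H)) = gr(H) ∩ (−gr(H)). -/
def Lminus (H : SVMap n) : SVMap n := fun x => {y | y ∈ H x ∧ -y ∈ H (-x)}

/-- The maximal linear process L₊: gr(L₊) = Lin(gr(H)) = gr(H) − gr(H). -/
def Lplus (H : SVMap n) : SVMap n :=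
  fun x => {y | ∃ x₁ y₁ x₂ y₂, y₁ ∈ H x₁ ∧ y₂ ∈ H x₂ ∧ x = x₁ - x₂ ∧ y = y₁ - y₂}

/-- The negative dual process: p ∈ H⁻(q) ⇔ ⟨p,x⟩ ≥ ⟨q,y⟩ for all (x,y) ∈ gr(H). -/
def negDual (H : SVMap n) : SVMap n :=
  fun q => {p | ∀ x y, y ∈ H x → ⟪q, y⟫ ≤ ⟪p, x⟫}

/-- The positive dual process: p ∈ H⁺(q) ⇔ ⟨p,x⟩ ≤ ⟨q,y⟩ for all (x,y) ∈ gr(H). -/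
def posDual (H : SVMap n) : SVMap n :=
  fun q => {p | ∀ x y, y ∈ H x → ⟪p, x⟫ ≤ ⟪q, y⟫}

/-- The negative polar cone of a set. -/
def negPolar (C : Set (EuclideanSpace ℝ (Fin n))) : Set (EuclideanSpace ℝ (Fin n)) :=
  {y | ∀ x ∈ C, ⟪x, y⟫ ≤ 0}

/-- The positive polar cone of a set. -/
def posPolar (C : Set (EuclideanSpace ℝ (Fin n))) : Set (EuclideanSpace ℝ (Fin n)) :=
  {y | ∀ x ∈ C, 0 ≤ ⟪x, y⟫}

/-- C is weakly H invariant: H(x) ∩ C ≠ ∅ for all x ∈ C. -/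
def WeaklyInv (H : SVMap n) (C : Set (EuclideanSpace ℝ (Fin n))) : Prop :=
  ∀ x ∈ C, (H x ∩ C).Nonempty

/-- C is strongly H invariant: H(x) ⊆ C for all x ∈ C. -/
def StronglyInv (H : SVMap n) (C : Set (EuclideanSpace ℝ (Fin n))) : Prop :=
  ∀ x ∈ C, H x ⊆ C

/-- H is reachable: every feasible state is reachable. -/
def IsReachable (H : SVMap n) : Prop := feas H ⊆ reach H

/-- H is null-controllable: every feasible state is null-controllable. -/
def IsNullControllable (H : SVMap n) : Prop := feas H ⊆ nullc H

/-! Pick `e` with `⟪e, x⟫ > 0` on `K \ {0}` (possible as `K` is pointed) and an order unit `u` of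
`K`. Since `H 0 ∩ K = {0}`, the pairs `g ∈ H x ∩ K` with `⟪e, x⟫ = 1` form a compact set, so for
`ε > 0` some such pair maximises `lam ≥ 0` subject to `g + ε • u - lam • x ∈ K`. Weak invariance
shows that the slack `g + ε • u - lam • x` vanishes at a maximiser, i.e. `lam • x - ε • u ∈ H x`;
compactness then lets `ε → 0`. -/

section Cones

variable {E : Type*}

lemma IsConvexCone.zero_mem [AddCommMonoid E] [Module ℝ E] {K : Set E} (hK : IsConvexCone K) :
    (0 : E) ∈ K := by
  obtain ⟨⟨x, hx⟩, -, hsmul⟩ := hK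
  simpa using hsmul 0 le_rfl x hx

lemma IsConvexCone.add_mem [AddCommMonoid E] [Module ℝ E] {K : Set E} (hK : IsConvexCone K)
    {x y : E} (hx : x ∈ K) (hy : y ∈ K) : x + y ∈ K := by
  have hmid := hK.2.1 hx hy (by norm_num : (0 : ℝ) ≤ 1 / 2) (by norm_num : (0 : ℝ) ≤ 1 / 2)
    (by norm_num)
  convert hK.2.2 2 zero_le_two _ hmid using 1
  module

lemma IsConvexCone.smul_mem [AddCommMonoid E] [Module ℝ E] {K : Set E} (hK : IsConvexCone K)
    {c : ℝ} (hc : 0 ≤ c) {x : E} (hx : x ∈ K) : c • x ∈ K :=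
  hK.2.2 c hc x hx

def IsConvexCone.toProperCone [AddCommGroup E] [Module ℝ E] [TopologicalSpace E] {K : Set E}
    (hK : IsConvexCone K) (hKc : IsClosed K) : ProperCone ℝ E where
  carrier := K
  add_mem' := hK.add_mem
  zero_mem' := hK.zero_mem
  smul_mem' c _ hx := hK.smul_mem c.2 hx
  isClosed' := hKc

@[simp]
lemma IsConvexCone.mem_toProperCone [AddCommGroup E] [Module ℝ E] [TopologicalSpace E] {K : Set E}
    (hK : IsConvexCone K) (hKc : IsClosed K) {x : E} : x ∈ hK.toProperCone hKc ↔ x ∈ K :=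
  Iff.rfl

lemma PointedCone.exists_orderUnit [AddCommGroup E] [Module ℝ E] [FiniteDimensional ℝ E]
    (C : PointedCone ℝ E) :
    ∃ u ∈ C, ∀ d ∈ Submodule.span ℝ (C : Set E), ∃ δ : ℝ, 0 < δ ∧ u + δ • d ∈ C := by
  obtain ⟨b, hbC, hbspan, hbli⟩ := exists_linearIndependent ℝ (C : Set E)
  obtain ⟨T, rfl⟩ := hbli.setFinite.exists_finset_coe
  refine ⟨∑ v ∈ T, v, C.sum_mem fun v hv => hbC hv, fun d hd => ?_⟩
  rw [← hbspan, Submodule.mem_span_finset] at hd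
  obtain ⟨f, -, rfl⟩ := hd
  set t := 1 + ∑ v ∈ T, |f v|
  have ht : 0 < t := by positivity
  have hcoeff : ∀ v ∈ T, 0 ≤ t + f v := fun v hv => by
    have := Finset.single_le_sum (fun w _ => abs_nonneg (f w)) hv
    linarith [neg_abs_le (f v)]
  have hmem : t • ∑ v ∈ T, v + ∑ v ∈ T, f v • v ∈ C := by
    convert C.sum_mem fun v hv => C.smul_mem (hcoeff v hv) (hbC hv) using 1
    simp only [add_smul, Finset.sum_add_distrib, Finset.smul_sum]
  refine ⟨t⁻¹, inv_pos.mpr ht, ?_⟩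
  convert C.smul_mem (inv_nonneg.mpr ht.le) hmem using 1
  rw [smul_add, inv_smul_smul₀ ht.ne']

lemma ProperCone.exists_inner_pos_of_salient [NormedAddCommGroup E] [InnerProductSpace ℝ E]
    [FiniteDimensional ℝ E] (C : ProperCone ℝ E) (hC : ∀ x ∈ C, -x ∈ C → x = 0) :
    ∃ e : E, ∀ x ∈ C, x ≠ 0 → 0 < ⟪e, x⟫ := by
  set D := ProperCone.innerDual (C : Set E)
  have hspan : Submodule.span ℝ (D : Set E) = ⊤ := by
    -- A vector orthogonal to the dual cone lies, with its negative, in the bidual cone `C`.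
    by_contra hne
    obtain ⟨d, hd, hd0⟩ :=
      Submodule.exists_mem_ne_zero_of_ne_bot (mt Submodule.orthogonal_eq_bot_iff.mp hne)
    have hmem : ∀ z, (∀ y ∈ D, ⟪y, z⟫ = 0) → z ∈ C := fun z hz => by
      rw [← ProperCone.innerDual_innerDual C, ProperCone.mem_innerDual]
      exact fun y hy => (hz y hy).ge
    have hdD : ∀ y ∈ D, ⟪y, d⟫ = 0 := fun y hy =>
      (Submodule.mem_orthogonal _ _).mp hd y (Submodule.subset_span hy)
    exact hd0 (hC d (hmem d hdD) (hmem (-d) fun y hy => by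
      rw [inner_neg_right, hdD y hy, neg_zero]))
  obtain ⟨e, heD, he⟩ := PointedCone.exists_orderUnit (D : PointedCone ℝ E)
  refine ⟨e, fun x hx hx0 => ?_⟩
  obtain ⟨δ, hδ, hmem⟩ := he (-x) (hspan ▸ Submodule.mem_top)
  have h1 : 0 ≤ ⟪x, e + δ • -x⟫ := hmem hx
  rw [inner_add_right, inner_smul_right, inner_neg_right, real_inner_self_eq_norm_sq] at h1
  have : 0 < δ * ‖x‖ ^ 2 := by positivity
  rw [real_inner_comm]
  linarith

lemma exists_pos_mul_norm_le_of_isClosed_cone {F : Type*} [NormedAddCommGroup E]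
    [NormedSpace ℝ E] [ProperSpace E] [NormedAddCommGroup F] [NormedSpace ℝ F] {C : Set E}
    (hC : IsClosed C) (hsmul : ∀ c : ℝ, 0 < c → ∀ x ∈ C, c • x ∈ C) (f : E →L[ℝ] F)
    (hf : ∀ x ∈ C, f x = 0 → x = 0) : ∃ m : ℝ, 0 < m ∧ ∀ x ∈ C, m * ‖x‖ ≤ ‖f x‖ := by
  obtain ⟨m, hm, hmin⟩ := ((isCompact_sphere (0 : E) 1).inter_left hC).exists_forall_le'
    (f := fun x => ‖f x‖) (by fun_prop) (a := 0) fun x ⟨hxC, hx1⟩ => norm_pos_iff.mpr fun h => by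
      simp [hf x hxC h] at hx1
  refine ⟨m, hm, fun x hx => ?_⟩
  rcases eq_or_ne x 0 with rfl | hx0
  · simp
  have hxn : 0 < ‖x‖ := norm_pos_iff.mpr hx0
  have := hmin (‖x‖⁻¹ • x) ⟨hsmul _ (inv_pos.mpr hxn) x hx, by simp [norm_smul, hxn.ne']⟩
  rwa [map_smul, norm_smul, norm_inv, norm_norm, ← div_eq_inv_mul, le_div_iff₀ hxn] at this

end Cones

section Limit

variable {E : Type*} [NormedAddCommGroup E] [InnerProductSpace ℝ E]

lemma exists_eigenpair_of_forall_approx {S : Set (E × E)} (hS : IsCompact S) {e : E}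
    (he : ∀ p ∈ S, ⟪e, p.1⟫ = 1) (u : E)
    (happrox : ∀ ε : ℝ, 0 < ε → ∃ p ∈ S, ∃ lam : ℝ, p.2 + ε • u = lam • p.1) :
    ∃ p ∈ S, ∃ lam : ℝ, p.2 = lam • p.1 := by
  -- On `S` the eigenvalue is forced to be `⟪e, g + ε • u⟫`, so `Q` lives in `[0, 1] × S`.
  set Q : Set (ℝ × (E × E)) :=
    {q | q.1 ∈ Icc 0 1 ∧ q.2 ∈ S ∧ q.2.2 + q.1 • u = ⟪e, q.2.2 + q.1 • u⟫ • q.2.1}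
  have hQc : IsClosed Q :=
    (isClosed_Icc.preimage continuous_fst).inter ((hS.isClosed.preimage continuous_snd).inter
      (isClosed_eq (by fun_prop) (by fun_prop)))
  have hQ : IsCompact Q := (isCompact_Icc.prod hS).of_isClosed_subset hQc fun q hq => ⟨hq.1, hq.2.1⟩
  have hsub : Ioc 0 1 ⊆ Prod.fst '' Q := fun ε hε => by
    obtain ⟨p, hp, lam, h⟩ := happrox ε hε.1
    have hlam : ⟪e, p.2 + ε • u⟫ = lam := by rw [h, real_inner_smul_right, he p hp, mul_one]
    exact ⟨(ε, p), ⟨Ioc_subset_Icc_self hε, hp, by rw [hlam, h]⟩, rfl⟩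
  have h0 : (0 : ℝ) ∈ Prod.fst '' Q :=
    (hQ.image continuous_fst).isClosed.closure_subset_iff.mpr hsub
      (closure_Ioc (zero_ne_one' ℝ) ▸ left_mem_Icc.mpr zero_le_one)
  obtain ⟨⟨ε, p⟩, ⟨-, hp, h⟩, rfl⟩ := h0
  exact ⟨p, hp, _, by simpa using h⟩

end Limit

section Eigenpairs

local notation "ℝⁿ" => EuclideanSpace ℝ (Fin n)

lemma IsConvexProcess.smul_mem {H : SVMap n} (hH : IsConvexProcess H) {c : ℝ} (hc : 0 ≤ c)
    {x y : ℝⁿ} (h : y ∈ H x) : c • y ∈ H (c • x) :=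
  IsConvexCone.smul_mem hH hc (show (x, y) ∈ graph H from h)

lemma IsConvexProcess.add_mem {H : SVMap n} (hH : IsConvexProcess H) {x₁ x₂ y₁ y₂ : ℝⁿ}
    (h₁ : y₁ ∈ H x₁) (h₂ : y₂ ∈ H x₂) : y₁ + y₂ ∈ H (x₁ + x₂) :=
  IsConvexCone.add_mem hH (show (x₁, y₁) ∈ graph H from h₁) (show (x₂, y₂) ∈ graph H from h₂)

def baseGraph (H : SVMap n) (K : Set ℝⁿ) (e : ℝⁿ) : Set (ℝⁿ × ℝⁿ) :=
  graph H ∩ K ×ˢ K ∩ {p | ⟪e, p.1⟫ = 1}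

lemma isCompact_baseGraph {H : SVMap n} (hH : IsConvexProcess H) (hHc : IsClosed (graph H))
    {K : Set ℝⁿ} (hK : IsConvexCone K) (hKc : IsClosed K) (hH0 : H 0 ∩ K = {0}) {e : ℝⁿ}
    (he : ∀ x ∈ K, x ≠ 0 → 0 < ⟪e, x⟫) : IsCompact (baseGraph H K e) := by
  have hGc : IsClosed (graph H ∩ K ×ˢ K) := hHc.inter (hKc.prod hKc)
  have hclosed : IsClosed (baseGraph H K e) :=
    hGc.inter (isClosed_eq (by fun_prop) continuous_const)
  obtain ⟨m, hm, hbound⟩ := exists_pos_mul_norm_le_of_isClosed_cone hGc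
    (fun c hc p hp => ⟨hH.2.2 c hc.le p hp.1, hK.smul_mem hc.le hp.2.1, hK.smul_mem hc.le hp.2.2⟩)
    ((innerSL ℝ e).comp (ContinuousLinearMap.fst ℝ ℝⁿ ℝⁿ)) fun p hp hp0 => by
      have hx : p.1 = 0 := by_contra fun h => (he p.1 hp.2.1 h).ne' hp0
      have hy : p.2 ∈ H 0 ∩ K := ⟨hx ▸ hp.1, hp.2.2⟩
      rw [hH0] at hy
      exact Prod.ext hx hy
  refine (isCompact_closedBall 0 m⁻¹).of_isClosed_subset hclosed fun p hp => ?_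
  have hp1 : ⟪e, p.1⟫ = 1 := hp.2
  have := hbound p hp.1
  rw [ContinuousLinearMap.comp_apply, ContinuousLinearMap.coe_fst', innerSL_apply_apply, hp1,
    norm_one] at this
  rwa [mem_closedBall_zero_iff, ← one_div, le_div_iff₀ hm, mul_comm]

lemma baseGraph_nonempty {H : SVMap n} {K : Set ℝⁿ} (hK : IsConvexCone K) (hKne : K ≠ {0})
    (hweak : WeaklyInv H K) {e : ℝⁿ} (he : ∀ x ∈ K, x ≠ 0 → 0 < ⟪e, x⟫) :
    (baseGraph H K e).Nonempty := by
  obtain ⟨k, hk, hk0⟩ : ∃ k ∈ K, k ≠ 0 := by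
    by_contra! h
    exact hKne (Set.eq_singleton_iff_unique_mem.mpr ⟨hK.zero_mem, h⟩)
  have hx : ⟪e, k⟫⁻¹ • k ∈ K := hK.smul_mem (inv_nonneg.mpr (he k hk hk0).le) hk
  obtain ⟨g, hgH, hgK⟩ := hweak _ hx
  refine ⟨(_, g), ⟨hgH, hx, hgK⟩, ?_⟩
  exact (real_inner_smul_right _ _ _).trans (inv_mul_cancel₀ (he k hk hk0).ne')

/-- With `w ∈ H z ∩ K` for the nonzero slack `z = g + ε • u - lam • x`, the pair
`(x₁, g₁) ∝ (lam • x + z, lam • g + w)` is admissible, and its slack contains a positive multiple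
of the order unit `u`, which absorbs a small extra multiple of `x₁`. -/
lemma exists_gt_of_baseGraph {H : SVMap n} (hH : IsConvexProcess H) {K : Set ℝⁿ}
    (hK : IsConvexCone K) (hweak : WeaklyInv H K) {e u : ℝⁿ}
    (he : ∀ x ∈ K, x ≠ 0 → 0 < ⟪e, x⟫) (hu : ∀ x ∈ K, ∃ δ : ℝ, 0 < δ ∧ u - δ • x ∈ K)
    {ε lam : ℝ} (hε : 0 < ε) (hlam : 0 ≤ lam) {x g : ℝⁿ} (hxg : (x, g) ∈ baseGraph H K e)
    (hz : g + ε • u - lam • x ∈ K) (hz0 : g + ε • u - lam • x ≠ 0) :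
    ∃ lam' > lam, ∃ p ∈ baseGraph H K e, p.2 + ε • u - lam' • p.1 ∈ K := by
  obtain ⟨⟨hgH, hxK, hgK⟩, hxe⟩ := hxg
  set y := g + ε • u
  set z := y - lam • x
  have hyz : y = lam • x + z := (add_sub_cancel _ _).symm
  have hyK : y ∈ K := hyz ▸ hK.add_mem (hK.smul_mem hlam hxK) hz
  set t := ⟪e, y⟫
  have ht : t = lam + ⟪e, z⟫ := by
    simp only [t]
    rw [hyz, inner_add_right, real_inner_smul_right, show ⟪e, x⟫ = 1 from hxe, mul_one]
  have hez := he z hz hz0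
  have htpos : 0 < t := by linarith
  obtain ⟨w, hwH, hwK⟩ := hweak z hz
  set x₁ := t⁻¹ • y
  have hx₁K : x₁ ∈ K := hK.smul_mem (inv_nonneg.mpr htpos.le) hyK
  obtain ⟨δ, hδ, hδK⟩ := hu x₁ hx₁K
  set c := ε * (1 - lam * t⁻¹)
  have hc : 0 < c := by
    have : lam * t⁻¹ < 1 := by rw [← div_eq_mul_inv, div_lt_one htpos]; linarith
    have := sub_pos.mpr this
    positivity
  refine ⟨lam + c * δ, by linarith [mul_pos hc hδ], (x₁, t⁻¹ • (lam • g + w)),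
    ⟨⟨?_, hx₁K, ?_⟩, ?_⟩, ?_⟩
  · exact hH.smul_mem (inv_nonneg.mpr htpos.le) (hyz ▸ hH.add_mem (hH.smul_mem hlam hgH) hwH)
  · exact hK.smul_mem (inv_nonneg.mpr htpos.le) (hK.add_mem (hK.smul_mem hlam hgK) hwK)
  · exact (real_inner_smul_right _ _ _).trans (inv_mul_cancel₀ htpos.ne')
  · have key : t⁻¹ • (lam • g + w) + ε • u - (lam + c * δ) • x₁ = t⁻¹ • w + c • (u - δ • x₁) := by
      simp only [x₁, y, c]
      module
    simp only [key]
    exact hK.add_mem (hK.smul_mem (inv_nonneg.mpr htpos.le) hwK) (hK.smul_mem hc.le hδK)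

lemma exists_approx_eigenpair {H : SVMap n} (hH : IsConvexProcess H) {K : Set ℝⁿ}
    (hK : IsConvexCone K) (hKc : IsClosed K) (hweak : WeaklyInv H K) {e u : ℝⁿ}
    (he : ∀ x ∈ K, x ≠ 0 → 0 < ⟪e, x⟫) (huK : u ∈ K)
    (hu : ∀ x ∈ K, ∃ δ : ℝ, 0 < δ ∧ u - δ • x ∈ K) (hS : IsCompact (baseGraph H K e))
    (hSne : (baseGraph H K e).Nonempty) {ε : ℝ} (hε : 0 < ε) :
    ∃ p ∈ baseGraph H K e, ∃ lam : ℝ, p.2 + ε • u = lam • p.1 := by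
  set S := baseGraph H K e
  set Q : Set (ℝ × (ℝⁿ × ℝⁿ)) := {q | 0 ≤ q.1 ∧ q.2 ∈ S ∧ q.2.2 + ε • u - q.1 • q.2.1 ∈ K}
  have hQc : IsClosed Q :=
    (isClosed_Ici.preimage continuous_fst).inter ((hS.isClosed.preimage continuous_snd).inter
      (hKc.preimage (by fun_prop)))
  obtain ⟨Λ, hΛ⟩ := hS.bddAbove_image (f := fun p => ⟪e, p.2 + ε • u⟫) (by fun_prop)
  have hQ : IsCompact Q := (isCompact_Icc (a := 0) (b := Λ) |>.prod hS).of_isClosed_subset hQc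
    fun q ⟨hq0, hqS, hqK⟩ => by
      have h1 : ⟪e, q.2.1⟫ = 1 := hqS.2
      have h2 : 0 ≤ ⟪e, q.2.2 + ε • u - q.1 • q.2.1⟫ := by
        rcases eq_or_ne (q.2.2 + ε • u - q.1 • q.2.1) 0 with h | h
        · rw [h, inner_zero_right]
        · exact (he _ hqK h).le
      rw [inner_sub_right, real_inner_smul_right, h1, mul_one] at h2
      exact ⟨⟨hq0, by linarith [hΛ ⟨q.2, hqS, rfl⟩]⟩, hqS⟩
  obtain ⟨p₀, hp₀⟩ := hSne
  have hQne : (0, p₀) ∈ Q :=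
    ⟨le_rfl, hp₀, by simpa using hK.add_mem hp₀.1.2.2 (hK.smul_mem hε.le huK)⟩
  obtain ⟨⟨lam, x, g⟩, ⟨hlam, hxg, hz⟩, hmax⟩ :=
    hQ.exists_isMaxOn ⟨_, hQne⟩ continuous_fst.continuousOn
  refine ⟨(x, g), hxg, lam, ?_⟩
  by_contra hne
  obtain ⟨lam', hlam', p, hp, hp'⟩ :=
    exists_gt_of_baseGraph hH hK hweak he hu hε hlam hxg hz (sub_ne_zero.mpr hne)
  exact (isMaxOn_iff.mp hmax (lam', p) ⟨hlam.trans hlam'.le, hp, hp'⟩).not_gt hlam'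

end Eigenpairs

/-- a weakly invariant pointed closed cone contains an eigenvector of H
corresponding to a nonnegative eigenvalue. -/
theorem eigenvector_in_cone {n : ℕ} (H : SVMap n) (hH : IsConvexProcess H)
    (hHclosed : IsClosed (graph H))
    (K : Set (EuclideanSpace ℝ (Fin n))) (hK : IsConvexCone K) (hKclosed : IsClosed K)
    (hKne : K ≠ {0})
    (hline : ¬ ∃ x : EuclideanSpace ℝ (Fin n), x ≠ 0 ∧ x ∈ K ∧ -x ∈ K)
    (hH0 : H 0 ∩ K = {0})
    (hweak : WeaklyInv H K) :
    ∃ ξ ∈ K, ξ ≠ 0 ∧ ∃ lam : ℝ, 0 ≤ lam ∧ lam • ξ ∈ H ξ := by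
  obtain ⟨e, he⟩ := ProperCone.exists_inner_pos_of_salient (hK.toProperCone hKclosed)
    fun x hx hnx => not_not.mp fun hx0 => hline ⟨x, hx0, hx, hnx⟩
  obtain ⟨u, huK, hu⟩ := PointedCone.exists_orderUnit (hK.toProperCone hKclosed).toPointedCone
  have hu' : ∀ x ∈ K, ∃ δ : ℝ, 0 < δ ∧ u - δ • x ∈ K := fun x hx => by
    simpa [sub_eq_add_neg] using hu (-x) (Submodule.neg_mem _ (Submodule.subset_span hx))
  have hS := isCompact_baseGraph hH hHclosed hK hKclosed hH0 he
  obtain ⟨⟨ξ, g⟩, ⟨⟨hgH, hξK, hgK⟩, hξe⟩, lam, hg : g = lam • ξ⟩ :=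
    exists_eigenpair_of_forall_approx hS (fun p hp => hp.2) u fun ε hε =>
      exists_approx_eigenpair hH hK hKclosed hweak he huK hu' hS
        (baseGraph_nonempty hK hKne hweak he) hε
  subst hg
  have hξ0 : ξ ≠ 0 := by
    rintro rfl
    simp at hξe
  refine ⟨ξ, hξK, hξ0, lam, ?_, hgH⟩
  by_contra! hlam
  have := he _ hgK (smul_ne_zero hlam.ne hξ0)
  rw [real_inner_smul_right, show ⟪e, ξ⟫ = 1 from hξe, mul_one] at this
  linarith

end ConvexProcessPaper
end

section
/- Let H : ℝⁿ ⇉ ℝⁿ be a convex process such that dom(H) + R₋ = ℝⁿ, where R₋ is the reachable set of the minimal linear process L₋ associated with H. Then H is null-controllable if and only if N(H) − R(H) = ℝⁿ. -/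
open Pointwise Set RealInnerProductSpace

namespace ConvexProcessPaper

variable {n : ℕ}

/-!
The minimal linear process `L₋` has a linear reachable space `R₋`, and since increasing chains of
subspaces of `ℝⁿ` stabilize, all of `R₋` is reached in one fixed number `m` of steps. Translating
by `R₋` therefore costs nothing, so `dom H + R₋ = ℝⁿ` propagates to `dom Hᵏ + R₋ = ℝⁿ` for
every `k`, and `dom Hᵐ` is weakly `H`-invariant, hence feasible. Thus `F(H) + R₋ = ℝⁿ`; as
`R₋ = -R₋ ⊆ R(H)`, null-controllability gives `N(H) - R(H) = ℝⁿ`.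

Conversely, the convex cones `N(H) - Hᵏ(0)` increase to `ℝⁿ`, so by the same stabilization one of
them, say for `k = K`, is already `ℝⁿ`. For a trajectory `ξ = t₀, t₁, …` write `t_K = a - b` with
`a ∈ N(H)` and `b ∈ Hᴷ(0)`; adding a `K`-step path from `0` to `b` steers `ξ` to `a`, and then
to `0`.
-/

section Cone

variable {V : Type*} [AddCommGroup V] [Module ℝ V] {S : Set V}

theorem isConvexCone_iff :
    IsConvexCone S ↔
      0 ∈ S ∧ (∀ x ∈ S, ∀ y ∈ S, x + y ∈ S) ∧ ∀ c : ℝ, 0 ≤ c → ∀ x ∈ S, c • x ∈ S := by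
  refine ⟨fun ⟨⟨x, hx⟩, hconv, hsmul⟩ => ⟨?_, fun x hx y hy => ?_, hsmul⟩,
    fun ⟨h0, hadd, hsmul⟩ => ⟨⟨0, h0⟩, fun x hx y hy a b ha hb _ =>
      hadd _ (hsmul a ha x hx) _ (hsmul b hb y hy), hsmul⟩⟩
  · simpa using hsmul 0 le_rfl x hx
  · have hmid := hconv hx hy (a := 1 / 2) (b := 1 / 2) (by norm_num) (by norm_num) (by norm_num)
    convert hsmul 2 zero_le_two _ hmid using 1
    rw [smul_add, smul_smul, smul_smul]
    norm_num

theorem IsConvexCone.zero_mem_s16 (hS : IsConvexCone S) : 0 ∈ S := (isConvexCone_iff.1 hS).1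

theorem IsConvexCone.add_mem_s16 (hS : IsConvexCone S) {x y : V} (hx : x ∈ S) (hy : y ∈ S) :
    x + y ∈ S := (isConvexCone_iff.1 hS).2.1 x hx y hy

theorem IsConvexCone.smul_mem_s16 (hS : IsConvexCone S) {c : ℝ} (hc : 0 ≤ c) {x : V}
    (hx : x ∈ S) : c • x ∈ S := hS.2.2 c hc x hx

theorem IsConvexCone.sub {T : Set V} (hS : IsConvexCone S) (hT : IsConvexCone T) :
    IsConvexCone (S - T) := by
  refine isConvexCone_iff.2 ⟨⟨0, hS.zero_mem_s16, 0, hT.zero_mem_s16, sub_zero 0⟩, ?_, ?_⟩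
  · rintro _ ⟨a, ha, b, hb, rfl⟩ _ ⟨a', ha', b', hb', rfl⟩
    exact ⟨a + a', hS.add_mem_s16 ha ha', b + b', hT.add_mem_s16 hb hb',
      (sub_add_sub_comm a b a' b').symm⟩
  · rintro c hc _ ⟨a, ha, b, hb, rfl⟩
    exact ⟨c • a, hS.smul_mem_s16 hc ha, c • b, hT.smul_mem_s16 hc hb, (smul_sub c a b).symm⟩

def IsConvexCone.lineality (hS : IsConvexCone S) : Submodule ℝ V where
  carrier := {x | x ∈ S ∧ -x ∈ S}
  zero_mem' := ⟨hS.zero_mem_s16, by simpa using hS.zero_mem_s16⟩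
  add_mem' hx hy := ⟨hS.add_mem_s16 hx.1 hy.1, by simpa [add_comm] using hS.add_mem_s16 hx.2 hy.2⟩
  smul_mem' c x hx := by
    rcases le_total 0 c with hc | hc
    · exact ⟨hS.smul_mem_s16 hc hx.1, by simpa using hS.smul_mem_s16 hc hx.2⟩
    · exact ⟨by simpa using hS.smul_mem_s16 (neg_nonneg.2 hc) hx.2,
        by simpa using hS.smul_mem_s16 (neg_nonneg.2 hc) hx.1⟩

/-- The lineality spaces form an increasing chain of subspaces, which stabilizes, and by symmetry
every point of the union lies in one of them. -/
theorem exists_iUnion_subset_of_monotone [IsNoetherian ℝ V] {C : ℕ → Set V}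
    (hC : ∀ k, IsConvexCone (C k)) (hmono : Monotone C)
    (hneg : ∀ x ∈ ⋃ k, C k, -x ∈ ⋃ k, C k) : ∃ m, ⋃ k, C k ⊆ C m := by
  let W : ℕ →o Submodule ℝ V :=
    ⟨fun k => (hC k).lineality, fun _ _ hkl _ hx => ⟨hmono hkl hx.1, hmono hkl hx.2⟩⟩
  obtain ⟨m, hm⟩ := monotone_stabilizes_iff_noetherian.2 inferInstance W
  refine ⟨m, fun x hx => ?_⟩
  obtain ⟨a, hxa⟩ := mem_iUnion.1 hx
  obtain ⟨b, hxb⟩ := mem_iUnion.1 (hneg x hx)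
  have hxW : x ∈ W (max (max a b) m) :=
    ⟨hmono ((le_max_left a b).trans (le_max_left _ m)) hxa,
      hmono ((le_max_right a b).trans (le_max_left _ m)) hxb⟩
  rw [← hm _ (le_max_right _ m)] at hxW
  exact hxW.1

end Cone

variable {F G H : SVMap n}

def iter (H : SVMap n) (k : ℕ) : SVMap n := fun x => (imSet H)^[k] {x}

theorem mem_iter_zero {x y : EuclideanSpace ℝ (Fin n)} : y ∈ iter H 0 x ↔ y = x := Iff.rfl

theorem mem_iter_succ {k : ℕ} {x y : EuclideanSpace ℝ (Fin n)} :
    y ∈ iter H (k + 1) x ↔ ∃ z ∈ iter H k x, y ∈ H z := by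
  simp only [iter, Function.iterate_succ_apply', imSet, mem_iUnion₂, exists_prop]

theorem mem_iter_add {k l : ℕ} {x y : EuclideanSpace ℝ (Fin n)} :
    y ∈ iter H (k + l) x ↔ ∃ z ∈ iter H k x, y ∈ iter H l z := by
  induction l generalizing y with
  | zero => simp [mem_iter_zero]
  | succ l ih =>
    simp only [← add_assoc, mem_iter_succ]
    constructor
    · rintro ⟨w, hw, hy⟩
      obtain ⟨z, hz, hwz⟩ := ih.1 hw
      exact ⟨z, hz, w, hwz, hy⟩
    · rintro ⟨z, hz, w, hwz, hy⟩
      exact ⟨w, ih.2 ⟨z, hz, hwz⟩, hy⟩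

theorem mem_iter_succ' {k : ℕ} {x y : EuclideanSpace ℝ (Fin n)} :
    y ∈ iter H (k + 1) x ↔ ∃ z ∈ H x, y ∈ iter H k z := by
  rw [add_comm, mem_iter_add]
  simp [mem_iter_succ, mem_iter_zero]

theorem mem_reach {x : EuclideanSpace ℝ (Fin n)} : x ∈ reach H ↔ ∃ k, x ∈ iter H k 0 :=
  mem_iUnion

theorem mem_iter_invMap {k : ℕ} {x y : EuclideanSpace ℝ (Fin n)} :
    x ∈ iter (invMap H) k y ↔ y ∈ iter H k x := by
  induction k generalizing x with
  | zero => exact eq_comm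
  | succ k ih =>
    rw [mem_iter_succ, mem_iter_succ']
    exact exists_congr fun z => and_comm.trans (and_congr_right fun _ => ih)

theorem mem_nullc {x : EuclideanSpace ℝ (Fin n)} : x ∈ nullc H ↔ ∃ k, 0 ∈ iter H k x := by
  simp only [nullc, mem_reach, mem_iter_invMap]

theorem iter_subset_iter (hFG : ∀ x, F x ⊆ G x) (k : ℕ) (x : EuclideanSpace ℝ (Fin n)) :
    iter F k x ⊆ iter G k x := by
  induction k generalizing x with
  | zero => exact subset_rfl
  | succ k ih =>
    intro y hy
    obtain ⟨z, hz, hyz⟩ := mem_iter_succ.1 hy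
    exact mem_iter_succ.2 ⟨z, ih x hz, hFG z hyz⟩

theorem mem_iter_of_trajectory {ξ : EuclideanSpace ℝ (Fin n)}
    {t : ℕ → EuclideanSpace ℝ (Fin n)} (ht0 : t 0 = ξ) (ht : ∀ k, t (k + 1) ∈ H (t k)) (k : ℕ) :
    t k ∈ iter H k ξ := by
  induction k with
  | zero => exact ht0
  | succ k ih => exact mem_iter_succ.2 ⟨t k, ih, ht k⟩

theorem WeaklyInv.subset_feas {C : Set (EuclideanSpace ℝ (Fin n))} (hC : WeaklyInv H C) :
    C ⊆ feas H := by
  choose next hnextH hnextC using hC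
  intro ξ hξ
  let t : ℕ → C := fun k => Nat.rec ⟨ξ, hξ⟩ (fun _ x => ⟨next x x.2, hnextC x x.2⟩) k
  exact ⟨fun k => (t k).1, rfl, fun k => hnextH _ (t k).2⟩

theorem isConvexProcess_iff :
    IsConvexProcess H ↔ 0 ∈ H 0 ∧
      (∀ x y, y ∈ H x → ∀ x' y', y' ∈ H x' → y + y' ∈ H (x + x')) ∧
      ∀ c : ℝ, 0 ≤ c → ∀ x y, y ∈ H x → c • y ∈ H (c • x) := by
  simp only [IsConvexProcess, graph, isConvexCone_iff, mem_ofPred_eq, Prod.fst_zero, Prod.snd_zero,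
    Prod.fst_add, Prod.snd_add, Prod.forall, Prod.smul_fst, Prod.smul_snd]

namespace IsConvexProcess

variable (hH : IsConvexProcess H)
include hH

theorem zero_mem_s16 : (0 : EuclideanSpace ℝ (Fin n)) ∈ H 0 := (isConvexProcess_iff.1 hH).1

theorem add_mem_s16 {x x' y y' : EuclideanSpace ℝ (Fin n)} (hy : y ∈ H x) (hy' : y' ∈ H x') :
    y + y' ∈ H (x + x') := (isConvexProcess_iff.1 hH).2.1 x y hy x' y' hy'

theorem smul_mem_s16 {c : ℝ} (hc : 0 ≤ c) {x y : EuclideanSpace ℝ (Fin n)} (hy : y ∈ H x) :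
    c • y ∈ H (c • x) := (isConvexProcess_iff.1 hH).2.2 c hc x y hy

theorem isConvexCone_apply_zero : IsConvexCone (H 0) :=
  isConvexCone_iff.2 ⟨hH.zero_mem_s16, fun _ hx _ hy => by simpa using hH.add_mem_s16 hx hy,
    fun _ hc _ hx => by simpa using hH.smul_mem_s16 hc hx⟩

theorem invMap : IsConvexProcess (invMap H) :=
  isConvexProcess_iff.2
    ⟨hH.zero_mem_s16, fun _ _ hy _ _ => hH.add_mem_s16 hy, fun _ hc _ _ => hH.smul_mem_s16 hc⟩

theorem lminus : IsConvexProcess (Lminus H) := by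
  refine isConvexProcess_iff.2 ⟨⟨hH.zero_mem_s16, by simpa using hH.zero_mem_s16⟩,
    fun _ _ hy _ _ hy' => ⟨hH.add_mem_s16 hy.1 hy'.1, ?_⟩,
    fun c hc _ _ hy => ⟨hH.smul_mem_s16 hc hy.1, ?_⟩⟩
  · simpa [neg_add, add_comm] using hH.add_mem_s16 hy.2 hy'.2
  · simpa using hH.smul_mem_s16 hc hy.2

theorem iterate (k : ℕ) : IsConvexProcess (iter H k) := by
  induction k with
  | zero =>
    refine isConvexProcess_iff.2 ⟨rfl, fun _ _ hy _ _ hy' => ?_, fun _ _ _ _ hy => ?_⟩ <;>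
      simp_all [mem_iter_zero]
  | succ k ih =>
    refine isConvexProcess_iff.2 ⟨mem_iter_succ.2 ⟨0, ih.zero_mem_s16, hH.zero_mem_s16⟩, ?_, ?_⟩
    · intro x y hy x' y' hy'
      obtain ⟨z, hz, hyz⟩ := mem_iter_succ.1 hy
      obtain ⟨z', hz', hyz'⟩ := mem_iter_succ.1 hy'
      exact mem_iter_succ.2 ⟨z + z', ih.add_mem_s16 hz hz', hH.add_mem_s16 hyz hyz'⟩
    · intro c hc x y hy
      obtain ⟨z, hz, hyz⟩ := mem_iter_succ.1 hy
      exact mem_iter_succ.2 ⟨c • z, ih.smul_mem_s16 hc hz, hH.smul_mem_s16 hc hyz⟩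

theorem monotone_iter_zero : Monotone fun k => iter H k 0 := by
  refine monotone_nat_of_le_succ fun k y hy => ?_
  rw [add_comm, mem_iter_add]
  exact ⟨0, (hH.iterate 1).zero_mem_s16, hy⟩

theorem isConvexCone_reach : IsConvexCone (reach H) := by
  refine isConvexCone_iff.2 ⟨mem_reach.2 ⟨0, rfl⟩, fun x hx y hy => ?_,
    fun c hc x hx => ?_⟩
  · obtain ⟨k, hk⟩ := mem_reach.1 hx
    obtain ⟨l, hl⟩ := mem_reach.1 hy
    have hsum := (hH.iterate (max k l)).add_mem_s16 (hH.monotone_iter_zero (le_max_left k l) hk)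
      (hH.monotone_iter_zero (le_max_right k l) hl)
    exact mem_reach.2 ⟨max k l, by simpa using hsum⟩
  · obtain ⟨k, hk⟩ := mem_reach.1 hx
    exact mem_reach.2 ⟨k, by simpa using (hH.iterate k).smul_mem_s16 hc hk⟩

end IsConvexProcess

theorem neg_mem_iter_lminus {k : ℕ} {x y : EuclideanSpace ℝ (Fin n)}
    (hy : y ∈ iter (Lminus H) k x) : -y ∈ iter (Lminus H) k (-x) := by
  induction k generalizing y with
  | zero => exact congrArg Neg.neg hy
  | succ k ih =>
    obtain ⟨z, hz, hyz⟩ := mem_iter_succ.1 hy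
    exact mem_iter_succ.2 ⟨-z, ih hz, hyz.2, by simpa using hyz.1⟩

theorem neg_mem_reach_lminus {x : EuclideanSpace ℝ (Fin n)} (hx : x ∈ reach (Lminus H)) :
    -x ∈ reach (Lminus H) := by
  obtain ⟨k, hk⟩ := mem_reach.1 hx
  exact mem_reach.2 ⟨k, by simpa using neg_mem_iter_lminus hk⟩

theorem reach_lminus_subset_reach : reach (Lminus H) ⊆ reach H := fun x hx => by
  obtain ⟨k, hk⟩ := mem_reach.1 hx
  exact mem_reach.2 ⟨k, iter_subset_iter (fun _ _ hy => hy.1) k 0 hk⟩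

theorem IsConvexProcess.exists_reach_lminus_subset_iter (hH : IsConvexProcess H) :
    ∃ m, reach (Lminus H) ⊆ iter (Lminus H) m 0 :=
  exists_iUnion_subset_of_monotone (fun k => (hH.lminus.iterate k).isConvexCone_apply_zero)
    hH.lminus.monotone_iter_zero fun _ => neg_mem_reach_lminus

theorem IsConvexProcess.exists_mem_lminus_of_mem_reach_lminus (hH : IsConvexProcess H)
    {r : EuclideanSpace ℝ (Fin n)} (hr : r ∈ reach (Lminus H)) :
    ∃ z ∈ reach (Lminus H), r ∈ Lminus H z := by
  obtain ⟨m, hm⟩ := hH.exists_reach_lminus_subset_iter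
  obtain ⟨z, hz, hrz⟩ := mem_iter_succ.1 (hH.lminus.monotone_iter_zero m.le_succ (hm hr))
  exact ⟨z, mem_reach.2 ⟨m, hz⟩, hrz⟩

section Feasible

variable (hH : IsConvexProcess H) (hdom : dom H + reach (Lminus H) = univ)
include hH hdom

theorem IsConvexProcess.dom_iter_add_reach_lminus (k : ℕ) :
    dom (iter H k) + reach (Lminus H) = univ := by
  induction k with
  | zero =>
    exact eq_univ_of_forall fun x => mem_add.2 ⟨x, ⟨x, rfl⟩, 0, mem_reach.2 ⟨0, rfl⟩, add_zero x⟩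
  | succ k ih =>
    refine eq_univ_of_forall fun x => ?_
    obtain ⟨d, ⟨y, hy⟩, r, hr, rfl⟩ := mem_add.1 (hdom.symm ▸ mem_univ x)
    obtain ⟨d', ⟨w, hw⟩, r', hr', rfl⟩ := mem_add.1 (ih.symm ▸ mem_univ y)
    obtain ⟨z, hz, hr'z⟩ := hH.exists_mem_lminus_of_mem_reach_lminus (neg_mem_reach_lminus hr')
    have hd' : d' ∈ H (d + z) := by simpa using hH.add_mem_s16 hy hr'z.1
    refine mem_add.2 ⟨d + z, ⟨w, mem_iter_succ'.2 ⟨d', hd', hw⟩⟩, r + -z,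
      hH.lminus.isConvexCone_reach.add_mem_s16 hr (neg_mem_reach_lminus hz),
      by rw [add_add_add_comm, add_neg_cancel, add_zero]⟩

theorem IsConvexProcess.weaklyInv_dom_iter {m : ℕ}
    (hm : reach (Lminus H) ⊆ iter (Lminus H) m 0) : WeaklyInv H (dom (iter H m)) := by
  rintro u ⟨y, hy⟩
  obtain ⟨d, ⟨w, hw⟩, r, hr, rfl⟩ := mem_add.1 (hdom.symm ▸ mem_univ y)
  -- `y = d + r` can be steered to `d ∈ dom H` by running the `m`-step path from `0` to `-r`.
  have hneg_r : -r ∈ iter H m 0 :=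
    iter_subset_iter (fun _ _ h => h.1) m 0 (hm (neg_mem_reach_lminus hr))
  have hd : d ∈ iter H m u := by simpa using (hH.iterate m).add_mem_s16 hy hneg_r
  obtain ⟨z, hz, hwz⟩ := mem_iter_succ'.1 (mem_iter_succ.2 ⟨d, hd, hw⟩)
  exact ⟨z, hz, w, hwz⟩

theorem IsConvexProcess.feas_add_reach_lminus : feas H + reach (Lminus H) = univ := by
  obtain ⟨m, hm⟩ := hH.exists_reach_lminus_subset_iter
  refine eq_univ_of_univ_subset ?_
  rw [← hH.dom_iter_add_reach_lminus hdom m]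
  exact add_subset_add_right (hH.weaklyInv_dom_iter hdom hm).subset_feas

end Feasible

theorem IsConvexProcess.exists_nullc_sub_iter_eq_univ (hH : IsConvexProcess H)
    (h : nullc H - reach H = univ) : ∃ K, nullc H - iter H K 0 = univ := by
  have hU : ⋃ k, nullc H - iter H k 0 = univ := (sub_iUnion _ _).symm.trans h
  obtain ⟨K, hK⟩ := exists_iUnion_subset_of_monotone (C := fun k => nullc H - iter H k 0)
    (fun k => hH.invMap.isConvexCone_reach.sub (hH.iterate k).isConvexCone_apply_zero)
    (fun _ _ hkl => sub_subset_sub_left (hH.monotone_iter_zero hkl))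
    fun x _ => hU.symm ▸ mem_univ (-x)
  exact ⟨K, eq_univ_of_univ_subset (hU ▸ hK)⟩

theorem IsConvexProcess.isNullControllable_of_sub_iter_eq_univ (hH : IsConvexProcess H) {K : ℕ}
    (hK : nullc H - iter H K 0 = univ) : IsNullControllable H := by
  rintro ξ ⟨t, ht0, ht⟩
  obtain ⟨a, ha, b, hb, hab⟩ := mem_sub.1 (hK.symm ▸ mem_univ (t K))
  obtain ⟨p, hp⟩ := mem_nullc.1 ha
  have haξ : a ∈ iter H K ξ := by
    simpa [← hab] using (hH.iterate K).add_mem_s16 (mem_iter_of_trajectory ht0 ht K) hb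
  exact mem_nullc.2 ⟨K + p, mem_iter_add.2 ⟨a, haξ, hp⟩⟩

/-- H is null-controllable iff N(H) − R(H) = ℝⁿ. -/
theorem nullcontrollable_iff_sub_univ {n : ℕ} (H : SVMap n) (hH : IsConvexProcess H)
    (hdom : dom H + reach (Lminus H) = Set.univ) :
    IsNullControllable H ↔ nullc H - reach H = Set.univ := by
  refine ⟨fun hnc => eq_univ_of_forall fun x => ?_, fun h => ?_⟩
  · have hx : x ∈ feas H + reach (Lminus H) := hH.feas_add_reach_lminus hdom ▸ mem_univ x
    obtain ⟨u, hu, r, hr, rfl⟩ := mem_add.1 hx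
    exact ⟨u, hnc hu, -r, reach_lminus_subset_reach (neg_mem_reach_lminus hr),
      sub_neg_eq_add u r⟩
  · obtain ⟨K, hK⟩ := hH.exists_nullc_sub_iter_eq_univ h
    exact hH.isNullControllable_of_sub_iter_eq_univ hK

end ConvexProcessPaper
end
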